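/- arXiv:2411.08524 — 7 statements merged into one kernel-verified Lean document; each statement's English description precedes it below -/
import Mathlib

section
/- Let n, p, m be positive integers and let Y, O, M, S be real n×p matrices and X a real n×m matrix. For a real m×p matrix B, define the n×p matrix Ã(B) by Ã(B)_{ij} = exp(O_{ij} + (XB)_{ij} + M_{ij} + S_{ij}²/2), and define f(B) = Tr(Yᵀ(XB)) − Σ_{i=1}^n Σ_{j=1}^p Ã(B)_{ij} (the B-dependent part of the PLN evidence lower bound). Then f is differentiable at every B, and for every real m×p matrix H the derivative of f at B in direction H equals Tr((Xᵀ(Y − Ã(B)))ᵀ H); that is, the gradient of f at B is the m×p matrix Xᵀ(Y − Ã(B)). -/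
/-!
Absorb the constants into `C = O + M + S²/2`, so that `Ã(B) = exp∘(XB + C)` entrywise. The map
`A ↦ ∑ exp A_ij` has gradient `exp∘A`, the linear term `Tr(Yᵀ A)` has gradient `Y`, and
precomposing with the affine map `B ↦ XB + C` multiplies a gradient `G` by `Xᵀ`, because
`Tr(Gᵀ (X H)) = Tr((Xᵀ G)ᵀ H)`.
-/

open Matrix

attribute [local instance] Matrix.normedAddCommGroup Matrix.normedSpace

namespace Matrix

variable {l m n : Type*} [Fintype l] [Fintype m] [Fintype n]

theorem trace_transpose_mul_eq_sum {R : Type*} [AddCommMonoid R] [Mul R] (G H : Matrix m n R) :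
    (Gᵀ * H).trace = ∑ i, ∑ j, G i j * H i j := by
  rw [← vec_dotProduct_vec, dotProduct, ← Finset.univ_product_univ, Finset.sum_product,
    Finset.sum_comm]
  rfl

noncomputable def traceTransposeMulCLM (G : Matrix m n ℝ) : Matrix m n ℝ →L[ℝ] ℝ :=
  ((traceLinearMap n ℝ ℝ).comp (mulLeftLinearMap n ℝ Gᵀ)).toContinuousLinearMap

theorem traceTransposeMulCLM_apply (G H : Matrix m n ℝ) :
    traceTransposeMulCLM G H = (Gᵀ * H).trace :=
  rfl

theorem traceTransposeMulCLM_sub (G G' : Matrix m n ℝ) :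
    traceTransposeMulCLM (G - G') = traceTransposeMulCLM G - traceTransposeMulCLM G' := by
  ext H
  simp [traceTransposeMulCLM_apply, transpose_sub, Matrix.sub_mul, trace_sub]

theorem traceTransposeMulCLM_transpose_mul_apply (X : Matrix l m ℝ) (G : Matrix l n ℝ)
    (H : Matrix m n ℝ) : traceTransposeMulCLM (Xᵀ * G) H = (Gᵀ * (X * H)).trace := by
  rw [traceTransposeMulCLM_apply, transpose_mul, transpose_transpose, Matrix.mul_assoc]

theorem traceTransposeMulCLM_eq_sum (G : Matrix m n ℝ) :
    traceTransposeMulCLM G =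
      ∑ i, ∑ j, G i j • (entryLinearMap ℝ ℝ i j).toContinuousLinearMap := by
  ext H
  simp only [_root_.sum_apply, _root_.smul_apply, LinearMap.coe_toContinuousLinearMap',
    entryLinearMap_apply, smul_eq_mul, traceTransposeMulCLM_apply, trace_transpose_mul_eq_sum]

theorem hasFDerivAt_sum_exp (A : Matrix m n ℝ) :
    HasFDerivAt (fun A : Matrix m n ℝ => ∑ i, ∑ j, Real.exp (A i j))
      (traceTransposeMulCLM (A.map Real.exp)) A := by
  rw [traceTransposeMulCLM_eq_sum]
  exact HasFDerivAt.fun_sum fun i _ => HasFDerivAt.fun_sum fun j _ =>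
    (entryLinearMap ℝ ℝ i j).toContinuousLinearMap.hasFDerivAt.exp

theorem _root_.HasFDerivAt.comp_matrix_mul_add {φ : Matrix l n ℝ → ℝ} {G : Matrix l n ℝ}
    (X : Matrix l m ℝ) (C : Matrix l n ℝ) {B : Matrix m n ℝ}
    (h : HasFDerivAt φ (traceTransposeMulCLM G) (X * B + C)) :
    HasFDerivAt (fun B => φ (X * B + C)) (traceTransposeMulCLM (Xᵀ * G)) B := by
  refine (h.comp B
    ((mulLeftLinearMap n ℝ X).toContinuousLinearMap.hasFDerivAt.add_const C)).congr_fderiv ?_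
  exact ContinuousLinearMap.ext fun H => (traceTransposeMulCLM_transpose_mul_apply X G H).symm

theorem hasFDerivAt_trace_transpose_mul_mul_left (Y : Matrix l n ℝ) (X : Matrix l m ℝ)
    (B : Matrix m n ℝ) :
    HasFDerivAt (fun B => (Yᵀ * (X * B)).trace) (traceTransposeMulCLM (Xᵀ * Y)) B := by
  simpa only [traceTransposeMulCLM_apply, add_zero] using
    (traceTransposeMulCLM Y).hasFDerivAt.comp_matrix_mul_add X 0 (B := B)

end Matrix

theorem pln_elbo_grad_B_general
    (n p m : ℕ)
    (Y O M S : Matrix (Fin n) (Fin p) ℝ) (X : Matrix (Fin n) (Fin m) ℝ)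
    (Atil : Matrix (Fin m) (Fin p) ℝ → Matrix (Fin n) (Fin p) ℝ)
    (hAtil : ∀ B i j, Atil B i j = Real.exp (O i j + (X * B) i j + M i j + (S i j) ^ 2 / 2))
    (f : Matrix (Fin m) (Fin p) ℝ → ℝ)
    (hf : ∀ B, f B = (Yᵀ * (X * B)).trace - ∑ i, ∑ j, Atil B i j)
    (B : Matrix (Fin m) (Fin p) ℝ) :
    ∃ L : Matrix (Fin m) (Fin p) ℝ →L[ℝ] ℝ,
      HasFDerivAt f L B ∧
        ∀ H : Matrix (Fin m) (Fin p) ℝ, L H = ((Xᵀ * (Y - Atil B))ᵀ * H).trace := by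
  set C : Matrix (Fin n) (Fin p) ℝ := O + M + of fun i j => S i j ^ 2 / 2
  have hAtil_eq : ∀ B, Atil B = (X * B + C).map Real.exp := fun B => ext fun i j => by
    simp only [hAtil, map_apply, C, Matrix.add_apply, of_apply]
    congr 1
    ring
  have hf_eq : f = fun B => (Yᵀ * (X * B)).trace - ∑ i, ∑ j, Real.exp ((X * B + C) i j) :=
    funext fun B => by simp only [hf, hAtil_eq, map_apply]
  refine ⟨traceTransposeMulCLM (Xᵀ * (Y - Atil B)), ?_, fun H => rfl⟩
  rw [Matrix.mul_sub, traceTransposeMulCLM_sub, hf_eq, hAtil_eq]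
  exact (hasFDerivAt_trace_transpose_mul_mul_left Y X B).sub
    ((hasFDerivAt_sum_exp _).comp_matrix_mul_add X C)

/-- the gradient of the B-dependent part of the PLN ELBO,
`f(B) = Tr(Yᵀ(XB)) − Σ_{ij} Ã(B)_{ij}` with
`Ã(B)_{ij} = exp(O_{ij} + (XB)_{ij} + M_{ij} + S_{ij}²/2)`,
is `Xᵀ(Y − Ã(B))`. -/
theorem pln_elbo_grad_B
    (n p m : ℕ) (hn : 0 < n) (hp : 0 < p) (hm : 0 < m)
    (Y O M S : Matrix (Fin n) (Fin p) ℝ) (X : Matrix (Fin n) (Fin m) ℝ)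
    (Atil : Matrix (Fin m) (Fin p) ℝ → Matrix (Fin n) (Fin p) ℝ)
    (hAtil : ∀ B i j, Atil B i j = Real.exp (O i j + (X * B) i j + M i j + (S i j) ^ 2 / 2))
    (f : Matrix (Fin m) (Fin p) ℝ → ℝ)
    (hf : ∀ B, f B = (Yᵀ * (X * B)).trace - ∑ i, ∑ j, Atil B i j)
    (B : Matrix (Fin m) (Fin p) ℝ) :
    ∃ L : Matrix (Fin m) (Fin p) ℝ →L[ℝ] ℝ,
      HasFDerivAt f L B ∧
        ∀ H : Matrix (Fin m) (Fin p) ℝ, L H = ((Xᵀ * (Y - Atil B))ᵀ * H).trace :=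
  pln_elbo_grad_B_general n p m Y O M S X Atil hAtil f hf B
end

section
/- Let n, p, m be positive integers, Y, O, M, S real n×p matrices and X a real n×m matrix. For a real m×p matrix B define Ã(B)_{ij} = exp(O_{ij} + (XB)_{ij} + M_{ij} + S_{ij}²/2) and f(B) = Tr(Yᵀ(XB)) − Σ_{i,j} Ã(B)_{ij}. Then f is twice differentiable at every B, and its second derivative at B, evaluated at directions H, K (real m×p matrices), equals −Σ_{i=1}^n Σ_{j=1}^p Ã(B)_{ij} (XH)_{ij} (XK)_{ij}. In particular, the Hessian quadratic form of f is negative semidefinite, and in vectorized coordinates it equals −(I_p ⊗ Xᵀ) Diag(vec(Ã(B))) (I_p ⊗ X). -/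
open Matrix Kronecker

attribute [local instance] Matrix.normedAddCommGroup Matrix.normedSpace

/-!
Writing `ℓᵢⱼ(B) = (XB)ᵢⱼ`, the function `f` is a linear functional minus `∑ᵢⱼ exp(cᵢⱼ + ℓᵢⱼ(B))`
with constants `cᵢⱼ = Oᵢⱼ + Mᵢⱼ + Sᵢⱼ²/2`. Differentiating twice gives the bilinear form
`-∑ᵢⱼ Ãᵢⱼ ℓᵢⱼ ⊗ ℓᵢⱼ`, which is negative semidefinite since `Ã > 0`. Its Kronecker form
comes from `vec (X K) = (I ⊗ X) vec K`.
-/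

section SumExp

variable {E ι : Type*} [NormedAddCommGroup E] [NormedSpace ℝ E]

theorem hasFDerivAt_exp_const_add_clm (c : ℝ) (ℓ : E →L[ℝ] ℝ) (x : E) :
    HasFDerivAt (fun y => Real.exp (c + ℓ y)) (Real.exp (c + ℓ x) • ℓ) x :=
  (ℓ.hasFDerivAt.const_add c).exp

variable [Fintype ι] (T : E →L[ℝ] ℝ) (c : ι → ℝ) (ℓ : ι → E →L[ℝ] ℝ)

theorem neg_sum_smul_smulRight_self_apply (a : ι → ℝ) (u v : E) :
    (-∑ i, a i • (ℓ i).smulRight (ℓ i)) u v = -∑ i, a i * ℓ i u * ℓ i v := by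
  simp only [_root_.neg_apply, _root_.sum_apply, _root_.smul_apply,
    ContinuousLinearMap.smulRight_apply, smul_eq_mul, mul_assoc]

theorem hasFDerivAt_clm_sub_sum_exp (x : E) :
    HasFDerivAt (fun y => T y - ∑ i, Real.exp (c i + ℓ i y))
      (T - ∑ i, Real.exp (c i + ℓ i x) • ℓ i) x :=
  T.hasFDerivAt.sub (.fun_sum fun i _ => hasFDerivAt_exp_const_add_clm (c i) (ℓ i) x)

theorem hasFDerivAt_fderiv_clm_sub_sum_exp (x : E) :
    HasFDerivAt (fderiv ℝ fun y => T y - ∑ i, Real.exp (c i + ℓ i y))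
      (-∑ i, Real.exp (c i + ℓ i x) • (ℓ i).smulRight (ℓ i)) x := by
  have hfderiv : (fderiv ℝ fun y => T y - ∑ i, Real.exp (c i + ℓ i y)) =
      fun y => T - ∑ i, Real.exp (c i + ℓ i y) • ℓ i :=
    funext fun y => (hasFDerivAt_clm_sub_sum_exp T c ℓ y).fderiv
  rw [hfderiv]
  refine ((hasFDerivAt_const T x).sub (.fun_sum fun i _ =>
    (hasFDerivAt_exp_const_add_clm (c i) (ℓ i) x).smul_const (ℓ i))).congr_fderiv ?_
  ext
  simp [mul_assoc]

end SumExp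

section Vec

variable {R m n p : Type*} [CommSemiring R] [Fintype m] [Fintype n] [Fintype p]
  [DecidableEq n] [DecidableEq p]

theorem vec_dotProduct_kronecker_diagonal_kronecker_mulVec_vec
    (X : Matrix n m R) (D : Matrix n p R) (H K : Matrix m p R) :
    vec H ⬝ᵥ (((1 : Matrix p p R) ⊗ₖ Xᵀ) * diagonal (vec D) * ((1 : Matrix p p R) ⊗ₖ X)) *ᵥ
        vec K =
      ∑ i, ∑ j, D i j * (X * H) i j * (X * K) i j := by
  rw [← mulVec_mulVec, ← mulVec_mulVec, ← vec_mul_eq_mulVec, dotProduct_mulVec,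
    vec_vecMul_kronecker, transpose_transpose, Matrix.mul_one]
  simp only [dotProduct, mulVec_diagonal, vec, Fintype.sum_prod_type]
  rw [Finset.sum_comm]
  exact Fintype.sum_congr _ _ fun i => Fintype.sum_congr _ _ fun j => by ring

end Vec

theorem pln_elbo_hessian_B_general
    (n p m : ℕ)
    (Y O M S : Matrix (Fin n) (Fin p) ℝ) (X : Matrix (Fin n) (Fin m) ℝ)
    (Atil : Matrix (Fin m) (Fin p) ℝ → Matrix (Fin n) (Fin p) ℝ)
    (hAtil : ∀ B i j, Atil B i j = Real.exp (O i j + (X * B) i j + M i j + (S i j) ^ 2 / 2))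
    (f : Matrix (Fin m) (Fin p) ℝ → ℝ)
    (hf : ∀ B, f B = (Yᵀ * (X * B)).trace - ∑ i, ∑ j, Atil B i j)
    (B : Matrix (Fin m) (Fin p) ℝ) :
    DifferentiableAt ℝ f B ∧
    ∃ f'' : Matrix (Fin m) (Fin p) ℝ →L[ℝ] Matrix (Fin m) (Fin p) ℝ →L[ℝ] ℝ,
      HasFDerivAt (fderiv ℝ f) f'' B ∧
      (∀ H K : Matrix (Fin m) (Fin p) ℝ,
        f'' H K = -∑ i, ∑ j, Atil B i j * (X * H) i j * (X * K) i j) ∧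
      (∀ H : Matrix (Fin m) (Fin p) ℝ, f'' H H ≤ 0) ∧
      (∀ H K : Matrix (Fin m) (Fin p) ℝ,
        f'' H K =
          (fun q : Fin p × Fin m => H q.2 q.1) ⬝ᵥ
            ((-(((1 : Matrix (Fin p) (Fin p) ℝ) ⊗ₖ Xᵀ) *
                Matrix.diagonal (fun q : Fin p × Fin n => Atil B q.2 q.1) *
                ((1 : Matrix (Fin p) (Fin p) ℝ) ⊗ₖ X))) *ᵥ
              (fun q : Fin p × Fin m => K q.2 q.1))) := by
  let T : Matrix (Fin m) (Fin p) ℝ →L[ℝ] ℝ := LinearMap.toContinuousLinearMap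
    ((traceLinearMap _ ℝ ℝ).comp ((mulLeftLinearMap _ ℝ Yᵀ).comp (mulLeftLinearMap _ ℝ X)))
  let ℓ (q : Fin n × Fin p) : Matrix (Fin m) (Fin p) ℝ →L[ℝ] ℝ :=
    LinearMap.toContinuousLinearMap ((entryLinearMap ℝ ℝ q.1 q.2).comp (mulLeftLinearMap _ ℝ X))
  let c (q : Fin n × Fin p) : ℝ := O q.1 q.2 + M q.1 q.2 + S q.1 q.2 ^ 2 / 2
  have hℓ (q : Fin n × Fin p) (B' : Matrix (Fin m) (Fin p) ℝ) :
      ℓ q B' = (X * B') q.1 q.2 := rfl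
  have hAtil_eq (B' : Matrix (Fin m) (Fin p) ℝ) (i : Fin n) (j : Fin p) :
      Atil B' i j = Real.exp (c (i, j) + ℓ (i, j) B') := by
    rw [hAtil, hℓ]; congr 1; simp only [c]; ring
  have hf_eq : f = fun B' => T B' - ∑ q, Real.exp (c q + ℓ q B') := by
    ext B'
    simp only [hf, Fintype.sum_prod_type, hAtil_eq]
    rfl
  have hHess (H K : Matrix (Fin m) (Fin p) ℝ) :
      (-∑ q, Real.exp (c q + ℓ q B) • (ℓ q).smulRight (ℓ q)) H K =
        -∑ i, ∑ j, Atil B i j * (X * H) i j * (X * K) i j := by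
    refine (neg_sum_smul_smulRight_self_apply ℓ _ H K).trans ?_
    simp only [Fintype.sum_prod_type, hAtil_eq]
    rfl
  subst hf_eq
  refine ⟨(hasFDerivAt_clm_sub_sum_exp T c ℓ B).differentiableAt, _,
    hasFDerivAt_fderiv_clm_sub_sum_exp T c ℓ B, hHess, fun H => ?_, fun H K => ?_⟩
  · refine (hHess H H).trans_le (neg_nonpos.mpr ?_)
    exact Fintype.sum_nonneg fun i => Fintype.sum_nonneg fun j => by
      rw [mul_assoc]; exact mul_nonneg (by rw [hAtil]; positivity) (mul_self_nonneg _)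
  · rw [neg_mulVec, dotProduct_neg]
    exact (hHess H K).trans <| congrArg _
      (vec_dotProduct_kronecker_diagonal_kronecker_mulVec_vec X (Atil B) H K).symm

/-- the Hessian of the B-dependent part of the PLN ELBO
`f(B) = Tr(Yᵀ(XB)) − Σ_{ij} Ã(B)_{ij}` is, in directions `H, K`,
`−Σ_{ij} Ã(B)_{ij} (XH)_{ij} (XK)_{ij}`; it is negative semidefinite and in
vectorized coordinates equals `−(I_p ⊗ Xᵀ) Diag(vec Ã(B)) (I_p ⊗ X)`. -/
theorem pln_elbo_hessian_B
    (n p m : ℕ) (hn : 0 < n) (hp : 0 < p) (hm : 0 < m)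
    (Y O M S : Matrix (Fin n) (Fin p) ℝ) (X : Matrix (Fin n) (Fin m) ℝ)
    (Atil : Matrix (Fin m) (Fin p) ℝ → Matrix (Fin n) (Fin p) ℝ)
    (hAtil : ∀ B i j, Atil B i j = Real.exp (O i j + (X * B) i j + M i j + (S i j) ^ 2 / 2))
    (f : Matrix (Fin m) (Fin p) ℝ → ℝ)
    (hf : ∀ B, f B = (Yᵀ * (X * B)).trace - ∑ i, ∑ j, Atil B i j)
    (B : Matrix (Fin m) (Fin p) ℝ) :
    DifferentiableAt ℝ f B ∧
    ∃ f'' : Matrix (Fin m) (Fin p) ℝ →L[ℝ] Matrix (Fin m) (Fin p) ℝ →L[ℝ] ℝ,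
      HasFDerivAt (fderiv ℝ f) f'' B ∧
      (∀ H K : Matrix (Fin m) (Fin p) ℝ,
        f'' H K = -∑ i, ∑ j, Atil B i j * (X * H) i j * (X * K) i j) ∧
      (∀ H : Matrix (Fin m) (Fin p) ℝ, f'' H H ≤ 0) ∧
      (∀ H K : Matrix (Fin m) (Fin p) ℝ,
        f'' H K =
          (fun q : Fin p × Fin m => H q.2 q.1) ⬝ᵥ
            ((-(((1 : Matrix (Fin p) (Fin p) ℝ) ⊗ₖ Xᵀ) *
                Matrix.diagonal (fun q : Fin p × Fin n => Atil B q.2 q.1) *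
                ((1 : Matrix (Fin p) (Fin p) ℝ) ⊗ₖ X))) *ᵥ
              (fun q : Fin p × Fin m => K q.2 q.1))) :=
  pln_elbo_hessian_B_general n p m Y O M S X Atil hAtil f hf B
end

section
/- Let p be a positive integer, c ∈ ℝᵖ, Y ∈ ℝᵖ, and Ω a symmetric positive semidefinite real p×p matrix whose diagonal entries are strictly positive. Define J on ℝᵖ × (0,∞)ᵖ by J(m, s) = Σ_{j=1}^p [ Y_j m_j − exp(c_j + m_j + s_j²/2) + log s_j − (1/2) Ω_{jj} s_j² ] − (1/2) mᵀ Ω m. Then J is strictly concave on the convex set ℝᵖ × (0,∞)ᵖ. -/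
open Matrix

/-!
The `j`-th summand is `log s_j` plus a function of `(m_j, s_j)` that is concave (the exponential
of the convex `c_j + m_j + s_j²/2` is convex, and `Ω_jj ≥ 0`). On a chord along which `s_j`
moves, `log` is strictly concave; on one along which only `m_j` moves, `exp` is strictly convex.
So each summand is strictly concave in `(m_j, s_j)`, hence so is the sum, as distinct points differ
in some coordinate; subtracting the convex form `mᵀΩm / 2` keeps strict concavity.
-/

open Set Real

section

variable {𝕜 E F β ι : Type*} [Semiring 𝕜] [PartialOrder 𝕜]
  [AddCommMonoid E] [AddCommMonoid F] [Module 𝕜 E] [Module 𝕜 F]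
  [AddCommMonoid β] [PartialOrder β] [IsOrderedCancelAddMonoid β] [Module 𝕜 β]

theorem ConcaveOn.add_strictConcaveOn_snd {s : Set E} {t : Set F} {f : E × F → β} {g : F → β}
    (hf : ConcaveOn 𝕜 (s ×ˢ t) f) (hfib : ∀ y ∈ t, StrictConcaveOn 𝕜 s fun x ↦ f (x, y))
    (hg : StrictConcaveOn 𝕜 t g) :
    StrictConcaveOn 𝕜 (s ×ˢ t) fun z ↦ f z + g z.2 := by
  refine ⟨hf.1, fun z hz w hw hzw a b ha hb hab ↦ ?_⟩
  rcases eq_or_ne z.2 w.2 with h2 | h2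
  · obtain ⟨x, y⟩ := z
    obtain ⟨x', y'⟩ := w
    obtain rfl : y = y' := h2
    have hx : x ≠ x' := fun hx ↦ hzw (by rw [hx])
    have hfib' := (hfib y hz.2).2 hz.1 hw.1 hx ha hb hab
    simp only [Prod.smul_mk, Prod.mk_add_mk, Convex.combo_self hab, smul_add]
    rw [add_add_add_comm, Convex.combo_self hab]
    exact add_lt_add_left hfib' _
  · calc a • (f z + g z.2) + b • (f w + g w.2)
        = (a • f z + b • f w) + (a • g z.2 + b • g w.2) := by
          rw [smul_add, smul_add, add_add_add_comm]
      _ < f (a • z + b • w) + g (a • z.2 + b • w.2) :=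
          add_lt_add_of_le_of_lt (hf.2 hz hw ha.le hb.le hab) (hg.2 hz.2 hw.2 h2 ha hb hab)

theorem StrictConcaveOn.sum_prod_eval [Fintype ι] {s : ι → Set (E × F)} {f : ι → E × F → β}
    (hf : ∀ i, StrictConcaveOn 𝕜 (s i) (f i)) :
    StrictConcaveOn 𝕜 {z : (ι → E) × (ι → F) | ∀ i, (z.1 i, z.2 i) ∈ s i}
      fun z ↦ ∑ i, f i (z.1 i, z.2 i) := by
  refine ⟨fun z hz w hw a b ha hb hab i ↦ (hf i).1 (hz i) (hw i) ha hb hab,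
    fun z hz w hw hzw a b ha hb hab ↦ ?_⟩
  obtain ⟨i, hi⟩ : ∃ i, (z.1 i, z.2 i) ≠ (w.1 i, w.2 i) := by
    by_contra! h
    exact hzw (Prod.ext (funext fun i ↦ congrArg Prod.fst (h i))
      (funext fun i ↦ congrArg Prod.snd (h i)))
  simp only [Finset.smul_sum, ← Finset.sum_add_distrib]
  exact Finset.sum_lt_sum (fun j _ ↦ (hf j).concaveOn.2 (hz j) (hw j) ha.le hb.le hab)
    ⟨i, Finset.mem_univ _, (hf i).2 (hz i) (hw i) hi ha hb hab⟩

end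

theorem ConvexOn.rexp {E : Type*} [AddCommMonoid E] [Module ℝ E] {s : Set E} {f : E → ℝ}
    (hf : ConvexOn ℝ s f) : ConvexOn ℝ s fun x ↦ exp (f x) :=
  ⟨hf.1, fun x hx y hy a b ha hb hab ↦
    calc exp (f (a • x + b • y)) ≤ exp (a • f x + b • f y) := exp_le_exp.2 (hf.2 hx hy ha hb hab)
      _ ≤ a • exp (f x) + b • exp (f y) :=
          convexOn_exp.2 (mem_univ _) (mem_univ _) ha hb hab⟩

theorem strictConcaveOn_pln_elbo_term (c y k : ℝ) (hk : 0 ≤ k) :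
    StrictConcaveOn ℝ (Prod.snd ⁻¹' Ioi 0) fun z : ℝ × ℝ ↦
      y * z.1 - exp (c + z.1 + z.2 ^ 2 / 2) + log z.2 - 1 / 2 * k * z.2 ^ 2 := by
  have hsq : ConvexOn ℝ univ fun z : ℝ × ℝ ↦ z.2 ^ 2 :=
    (Even.convexOn_pow (𝕜 := ℝ) even_two).comp_linearMap (LinearMap.snd ℝ ℝ ℝ)
  have hexp : ConvexOn ℝ univ fun z : ℝ × ℝ ↦ exp (c + z.1 + z.2 ^ 2 / 2) := by
    refine ConvexOn.rexp ?_
    have := (((LinearMap.fst ℝ ℝ ℝ).convexOn convex_univ).add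
      (hsq.smul (by norm_num : (0 : ℝ) ≤ 1 / 2))).add_const c
    refine this.congr fun z _ ↦ ?_
    simp only [LinearMap.fst_apply, smul_eq_mul, Pi.add_apply]
    ring
  have hconc : ConcaveOn ℝ (univ ×ˢ Ioi 0) fun z : ℝ × ℝ ↦
      y * z.1 - exp (c + z.1 + z.2 ^ 2 / 2) - 1 / 2 * k * z.2 ^ 2 := by
    have := (((y • LinearMap.fst ℝ ℝ ℝ).concaveOn convex_univ).sub hexp).sub
      (hsq.smul (by positivity : (0 : ℝ) ≤ 1 / 2 * k))
    refine (this.subset (subset_univ _) (convex_univ.prod (convex_Ioi 0))).congr fun z _ ↦ ?_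
    simp only [Pi.sub_apply, LinearMap.smul_apply, LinearMap.fst_apply, smul_eq_mul]
  have hfib : ∀ b ∈ Ioi (0 : ℝ), StrictConcaveOn ℝ univ fun a : ℝ ↦
      y * a - exp (c + a + b ^ 2 / 2) - 1 / 2 * k * b ^ 2 := fun b _ ↦ by
    have := ((strictConvexOn_exp.translate_right (c + b ^ 2 / 2)).neg.add_concaveOn
      ((y • LinearMap.id).concaveOn convex_univ)).add_const (-(1 / 2 * k * b ^ 2))
    refine this.congr fun a _ ↦ ?_
    simp only [Pi.add_apply, Pi.neg_apply, Function.comp_apply, LinearMap.smul_apply,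
      LinearMap.id_apply, smul_eq_mul]
    ring_nf
  rw [← univ_prod]
  exact (hconc.add_strictConcaveOn_snd hfib strictConcaveOn_log_Ioi).congr fun z _ ↦ by ring

theorem Matrix.PosSemidef.convexOn_dotProduct_mulVec {n : Type*} [Fintype n]
    {A : Matrix n n ℝ} (hA : A.PosSemidef) : ConvexOn ℝ univ fun x ↦ x ⬝ᵥ A *ᵥ x := by
  refine ⟨convex_univ, fun u _ v _ a b ha hb hab ↦ ?_⟩
  have hsym : v ⬝ᵥ A *ᵥ u = u ⬝ᵥ A *ᵥ v := by
    rw [dotProduct_mulVec, ← mulVec_transpose, (isHermitian_iff_isSymm.1 hA.1).eq,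
      dotProduct_comm]
  have hdiff : 0 ≤ (u - v) ⬝ᵥ A *ᵥ (u - v) := by simpa using hA.dotProduct_mulVec_nonneg (u - v)
  obtain rfl : b = 1 - a := by linarith
  simp only [mulVec_add, mulVec_sub, mulVec_smul, dotProduct_add, add_dotProduct, dotProduct_sub,
    sub_dotProduct, dotProduct_smul, smul_dotProduct, smul_eq_mul, hsym] at hdiff ⊢
  nlinarith [mul_nonneg ha hb, mul_nonneg (mul_nonneg ha hb) hdiff]

theorem pln_elbo_strict_concave_general
    (p : ℕ) (c Y : Fin p → ℝ)
    (Ω : Matrix (Fin p) (Fin p) ℝ) (hΩ : Ω.PosSemidef)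
    (J : (Fin p → ℝ) × (Fin p → ℝ) → ℝ)
    (hJ : ∀ m s : Fin p → ℝ,
      J (m, s) = ∑ j, (Y j * m j - Real.exp (c j + m j + (s j) ^ 2 / 2)
          + Real.log (s j) - (1 / 2 : ℝ) * Ω j j * (s j) ^ 2)
        - (1 / 2 : ℝ) * (m ⬝ᵥ Ω.mulVec m)) :
    StrictConcaveOn ℝ {ms : (Fin p → ℝ) × (Fin p → ℝ) | ∀ j, 0 < ms.2 j} J := by
  have hsum := StrictConcaveOn.sum_prod_eval fun j ↦
    strictConcaveOn_pln_elbo_term (c j) (Y j) (Ω j j) hΩ.diag_nonneg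
  have hquad : ConvexOn ℝ {ms : (Fin p → ℝ) × (Fin p → ℝ) | ∀ j, 0 < ms.2 j}
      fun ms ↦ (1 / 2 : ℝ) * (ms.1 ⬝ᵥ Ω *ᵥ ms.1) :=
    ((hΩ.convexOn_dotProduct_mulVec.comp_linearMap (LinearMap.fst ℝ _ _)).smul
      (by norm_num)).subset (subset_univ _) hsum.1
  refine (hsum.sub_convexOn hquad).congr fun ⟨m, s⟩ _ ↦ ?_
  rw [hJ]
  rfl

/-- the single-observation PLN ELBO
`J(m, s) = Σ_j [Y_j m_j − exp(c_j + m_j + s_j²/2) + log s_j − (1/2) Ω_jj s_j²]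
          − (1/2) mᵀ Ω m`
is strictly concave on `ℝᵖ × (0,∞)ᵖ` when `Ω` is symmetric positive
semidefinite with strictly positive diagonal entries. -/
theorem pln_elbo_strict_concave
    (p : ℕ) (hp : 0 < p) (c Y : Fin p → ℝ)
    (Ω : Matrix (Fin p) (Fin p) ℝ) (hΩ : Ω.PosSemidef) (hdiag : ∀ j, 0 < Ω j j)
    (J : (Fin p → ℝ) × (Fin p → ℝ) → ℝ)
    (hJ : ∀ m s : Fin p → ℝ,
      J (m, s) = ∑ j, (Y j * m j - Real.exp (c j + m j + (s j) ^ 2 / 2)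
          + Real.log (s j) - (1 / 2 : ℝ) * Ω j j * (s j) ^ 2)
        - (1 / 2 : ℝ) * (m ⬝ᵥ Ω.mulVec m)) :
    StrictConcaveOn ℝ {ms : (Fin p → ℝ) × (Fin p → ℝ) | ∀ j, 0 < ms.2 j} J :=
  pln_elbo_strict_concave_general p c Y Ω hΩ J hJ
end

section
/- Let p be a positive integer, a, s ∈ ℝᵖ vectors with strictly positive entries, and Ω a symmetric positive definite real p×p matrix with diagonal vector ω. Define Λ = (I_p + D_{s}²(D_a + D_a D_{s}² + D_ω))⁻¹ D_a D_{s}². Then, with the partial (Loewner) order on symmetric matrices, I_p + D_a^{−1/2} Ω D_a^{−1/2} − D_s Λ D_s ≻ D_a^{−1/2} Ω D_a^{−1/2} ≻ 0; in particular I_p + D_a^{−1/2} Ω D_a^{−1/2} − D_s Λ D_s is positive definite and hence invertible. -/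
/-!
Every matrix in sight except `Ω` is diagonal, so `Λ` is the diagonal matrix with entries
`λⱼ = aⱼ sⱼ² / dⱼ`, where `dⱼ = 1 + sⱼ² (aⱼ + aⱼ sⱼ² + ωⱼ)`. Since `ωⱼ = Ωⱼⱼ > 0`, we have
`dⱼ - aⱼ sⱼ⁴ = 1 + aⱼ sⱼ² + ωⱼ sⱼ² > 0`, so `I - D_s Λ D_s` is diagonal with positive entries
`1 - sⱼ² λⱼ`. Conjugating `Ω` by the invertible diagonal `D_a^{-1/2}` keeps it positive definite,
and adding the two positive definite matrices gives the claim.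
-/

open Matrix

namespace Matrix

variable {n K : Type*} [Fintype n] [DecidableEq n] [Field K]

theorem inv_diagonal_of_ne_zero {v : n → K} (hv : ∀ i, v i ≠ 0) :
    (diagonal v)⁻¹ = diagonal v⁻¹ :=
  inv_eq_right_inv <| by
    rw [diagonal_mul_diagonal, ← diagonal_one]
    exact congrArg diagonal (funext fun i => mul_inv_cancel₀ (hv i))

theorem PosDef.diagonal_mul_mul_diagonal [PartialOrder K] [StarRing K] [TrivialStar K]
    {A : Matrix n n K} (hA : A.PosDef) {d : n → K} (hd : ∀ i, d i ≠ 0) :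
    (diagonal d * A * diagonal d).PosDef := by
  have hU : IsUnit (diagonal d) :=
    isUnit_diagonal.mpr (Pi.isUnit_iff.mpr fun i => (hd i).isUnit)
  simpa [star_eq_conjTranspose, diagonal_conjTranspose] using
    (IsUnit.posDef_star_right_conjugate_iff hU).mpr hA

end Matrix

theorem sq_mul_div_one_add_sq_mul_lt_one {a s ω : ℝ} (ha : 0 ≤ a) (hω : 0 ≤ ω) :
    s * (a * s ^ 2 / (1 + s ^ 2 * (a + a * s ^ 2 + ω))) * s < 1 := by
  have hd : 0 < 1 + s ^ 2 * (a + a * s ^ 2 + ω) := by positivity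
  rw [mul_comm, ← mul_assoc, ← mul_div_assoc, div_lt_one hd]
  nlinarith [mul_nonneg ha (sq_nonneg s), mul_nonneg hω (sq_nonneg s)]

theorem C_matrix_well_defined_general
    (p : ℕ) (a s : Fin p → ℝ)
    (ha : ∀ j, 0 < a j)
    (Ω : Matrix (Fin p) (Fin p) ℝ) (hΩ : Ω.PosDef)
    (ω : Fin p → ℝ) (hω : ∀ j, ω j = Ω j j)
    (Λ : Matrix (Fin p) (Fin p) ℝ)
    (hΛ : Λ = (1 + Matrix.diagonal (fun j => s j ^ 2) *
          (Matrix.diagonal a + Matrix.diagonal a * Matrix.diagonal (fun j => s j ^ 2) +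
            Matrix.diagonal ω))⁻¹ *
        (Matrix.diagonal a * Matrix.diagonal (fun j => s j ^ 2)))
    (Dainvsqrt : Matrix (Fin p) (Fin p) ℝ)
    (hD : Dainvsqrt = Matrix.diagonal fun j => (Real.sqrt (a j))⁻¹) :
    ((1 + Dainvsqrt * Ω * Dainvsqrt - Matrix.diagonal s * Λ * Matrix.diagonal s) -
        Dainvsqrt * Ω * Dainvsqrt).PosDef ∧
    (Dainvsqrt * Ω * Dainvsqrt).PosDef ∧
    (1 + Dainvsqrt * Ω * Dainvsqrt - Matrix.diagonal s * Λ * Matrix.diagonal s).PosDef ∧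
    IsUnit (1 + Dainvsqrt * Ω * Dainvsqrt - Matrix.diagonal s * Λ * Matrix.diagonal s).det := by
  have hω_nonneg j : 0 ≤ ω j := hω j ▸ hΩ.diag_pos.le
  set d : Fin p → ℝ := fun j => 1 + s j ^ 2 * (a j + a j * s j ^ 2 + ω j)
  have hd j : d j ≠ 0 := by have := (ha j).le; have := hω_nonneg j; positivity
  have hΛ_diag : Λ = diagonal fun j => a j * s j ^ 2 / d j := by
    simp only [hΛ, diagonal_mul_diagonal, diagonal_add, ← diagonal_one]
    change (diagonal d)⁻¹ * _ = _
    rw [inv_diagonal_of_ne_zero hd, diagonal_mul_diagonal]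
    simp only [div_eq_inv_mul, Pi.inv_apply]
  have hR : (1 - diagonal s * Λ * diagonal s).PosDef := by
    rw [hΛ_diag, diagonal_mul_diagonal, diagonal_mul_diagonal, ← diagonal_one, diagonal_sub,
      posDef_diagonal_iff]
    exact fun j => sub_pos.mpr (sq_mul_div_one_add_sq_mul_lt_one (ha j).le (hω_nonneg j))
  have hX : (Dainvsqrt * Ω * Dainvsqrt).PosDef :=
    hD ▸ hΩ.diagonal_mul_mul_diagonal fun j => inv_ne_zero (Real.sqrt_ne_zero'.mpr (ha j))
  set X := Dainvsqrt * Ω * Dainvsqrt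
  have hC : 1 + X - diagonal s * Λ * diagonal s = (1 - diagonal s * Λ * diagonal s) + X := by
    abel
  have hC_pos : (1 + X - diagonal s * Λ * diagonal s).PosDef := hC ▸ hR.add hX
  exact ⟨by rwa [hC, add_sub_cancel_right], hX, hC_pos, hC_pos.isUnit.map detMonoidHom⟩

/-- with `a, s` strictly positive, `Ω` symmetric positive
definite with diagonal `ω`, and
`Λ = (I + D_s²(D_a + D_a D_s² + D_ω))⁻¹ D_a D_s²`, one has, in the Loewner
order, `I + D_a^{−1/2} Ω D_a^{−1/2} − D_s Λ D_s ≻ D_a^{−1/2} Ω D_a^{−1/2} ≻ 0`;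
in particular the left-hand matrix is positive definite and invertible. -/
theorem C_matrix_well_defined
    (p : ℕ) (hp : 0 < p) (a s : Fin p → ℝ)
    (ha : ∀ j, 0 < a j) (hs : ∀ j, 0 < s j)
    (Ω : Matrix (Fin p) (Fin p) ℝ) (hΩ : Ω.PosDef)
    (ω : Fin p → ℝ) (hω : ∀ j, ω j = Ω j j)
    (Λ : Matrix (Fin p) (Fin p) ℝ)
    (hΛ : Λ = (1 + Matrix.diagonal (fun j => s j ^ 2) *
          (Matrix.diagonal a + Matrix.diagonal a * Matrix.diagonal (fun j => s j ^ 2) +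
            Matrix.diagonal ω))⁻¹ *
        (Matrix.diagonal a * Matrix.diagonal (fun j => s j ^ 2)))
    (Dainvsqrt : Matrix (Fin p) (Fin p) ℝ)
    (hD : Dainvsqrt = Matrix.diagonal fun j => (Real.sqrt (a j))⁻¹) :
    ((1 + Dainvsqrt * Ω * Dainvsqrt - Matrix.diagonal s * Λ * Matrix.diagonal s) -
        Dainvsqrt * Ω * Dainvsqrt).PosDef ∧
    (Dainvsqrt * Ω * Dainvsqrt).PosDef ∧
    (1 + Dainvsqrt * Ω * Dainvsqrt - Matrix.diagonal s * Λ * Matrix.diagonal s).PosDef ∧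
    IsUnit (1 + Dainvsqrt * Ω * Dainvsqrt - Matrix.diagonal s * Λ * Matrix.diagonal s).det :=
  C_matrix_well_defined_general p a s ha Ω hΩ ω hω Λ hΛ Dainvsqrt hD
end

section
/- Let p be a positive integer, a, s ∈ ℝᵖ with strictly positive entries, Ω a symmetric positive definite real p×p matrix with diagonal vector ω. Define Λ = (I_p + D_{s}²(D_a + D_a D_{s}² + D_ω))⁻¹ D_a D_{s}² and C = (I_p + D_a^{−1/2} Ω D_a^{−1/2} − D_s Λ D_s)⁻¹. Let M be the 2p×2p block matrix M = [[D_a + Ω, D_a D_s], [D_a D_s, D_a(I_p + D_s²) + D_s^{−2} + D_ω]] and let P be the 2p×2p block matrix P = [[D_a^{−1/2}, 0], [0, D_a^{−1/2}]] · [[C, −C D_s Λ], [−Λ D_s C, Λ + Λ D_s C D_s Λ]] · [[D_a^{−1/2}, 0], [0, D_a^{−1/2}]]. Then M · P = I_{2p}; that is, P = M⁻¹. -/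
/-!
Conjugating `M` by `blockdiag(D_a^{1/2}, D_a^{1/2})` turns it into
`[[I + D_a^{-1/2} Ω D_a^{-1/2}, D_s], [D_s, H]]` with `H` diagonal and `H Λ = I`; the middle
factor of `P` is the Schur-complement formula for the inverse of this block matrix. The Schur
complement `I + D_a^{-1/2} Ω D_a^{-1/2} - D_s Λ D_s`, whose inverse is `C`, is positive definite
because the diagonal matrix `D_s Λ D_s` has entries `a s² / (a (1 + s²) + s⁻² + ω) < 1`.
-/

open Matrix

theorem conj_mul_conj_eq_one {M : Type*} [Monoid M] {q q' x y : M} (hq : q * q' = 1)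
    (hxy : x * y = 1) : q * x * q * (q' * y * q') = 1 := by
  calc q * x * q * (q' * y * q') = q * (x * (q * q') * y) * q' := by simp only [mul_assoc]
    _ = 1 := by rw [hq, mul_one, hxy, mul_one, hq]

section LowerRightDiag

variable {n : Type*} {a s ω : n → ℝ}

noncomputable def lowerRightDiag (a s ω : n → ℝ) (j : n) : ℝ :=
  a j * (1 + s j ^ 2) + (s j ^ 2)⁻¹ + ω j

theorem lowerRightDiag_pos (ha : ∀ j, 0 < a j) (hs : ∀ j, s j ≠ 0) (hω : ∀ j, 0 ≤ ω j) (j : n) :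
    0 < lowerRightDiag a s ω j := by
  have := ha j; have := hs j; have := hω j
  unfold lowerRightDiag
  positivity

theorem mul_sq_lt_lowerRightDiag (ha : ∀ j, 0 < a j) (hs : ∀ j, s j ≠ 0) (hω : ∀ j, 0 ≤ ω j)
    (j : n) : a j * s j ^ 2 < lowerRightDiag a s ω j := by
  have : 0 < (s j ^ 2)⁻¹ := by have := hs j; positivity
  unfold lowerRightDiag
  linarith [ha j, hω j]

end LowerRightDiag

namespace Matrix

variable {m n α : Type*} [Fintype m] [Fintype n]

section Ring

variable [Ring α]

theorem fromBlocks_diag_mul_fromBlocks_mul_fromBlocks_diag (X : Matrix m m α) (Y : Matrix n n α)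
    (A : Matrix m m α) (B : Matrix m n α) (C : Matrix n m α) (D : Matrix n n α) :
    fromBlocks X 0 0 Y * fromBlocks A B C D * fromBlocks X 0 0 Y =
      fromBlocks (X * A * X) (X * B * Y) (Y * C * X) (Y * D * Y) := by
  simp [fromBlocks_multiply]

theorem fromBlocks_mul_fromBlocks_schur_eq_one [DecidableEq m] [DecidableEq n]
    {A K : Matrix m m α} {B : Matrix m n α} {C : Matrix n m α} {D Λ : Matrix n n α}
    (hD : D * Λ = 1) (hK : (A - B * Λ * C) * K = 1) :
    fromBlocks A B C D *
      fromBlocks K (-(K * B * Λ)) (-(Λ * C * K)) (Λ + Λ * C * K * B * Λ) = 1 := by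
  have hAK : A * K = 1 + B * Λ * C * K := by rw [← hK, sub_mul, sub_add_cancel]
  rw [fromBlocks_multiply, ← fromBlocks_one]
  congr 1
  · simp only [Matrix.mul_neg, ← Matrix.mul_assoc, hAK]; abel
  · simp only [Matrix.mul_neg, Matrix.mul_add, ← Matrix.mul_assoc, hAK, Matrix.add_mul,
      Matrix.one_mul]; abel
  · simp only [Matrix.mul_neg, ← Matrix.mul_assoc, hD, Matrix.one_mul]; abel
  · simp only [Matrix.mul_neg, Matrix.mul_add, ← Matrix.mul_assoc, hD, Matrix.one_mul]; abel

end Ring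

variable [DecidableEq n]

section DivisionRing

variable {K : Type*} [DivisionRing K] {v : n → K}

theorem diagonal_mul_diagonal_inv (hv : ∀ j, v j ≠ 0) :
    diagonal v * diagonal (fun j => (v j)⁻¹) = 1 := by
  rw [diagonal_mul_diagonal, ← diagonal_one]
  exact congrArg diagonal (funext fun j => mul_inv_cancel₀ (hv j))

theorem diagonal_inv_mul_diagonal (hv : ∀ j, v j ≠ 0) :
    diagonal (fun j => (v j)⁻¹) * diagonal v = 1 := by
  rw [diagonal_mul_diagonal, ← diagonal_one]
  exact congrArg diagonal (funext fun j => inv_mul_cancel₀ (hv j))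

end DivisionRing

theorem posDef_one_add_diagonal_mul_mul_diagonal_sub_diagonal {Ω : Matrix n n ℝ}
    (hΩ : Ω.PosSemidef) (x c : n → ℝ) (hc : ∀ j, c j < 1) :
    (1 + diagonal x * Ω * diagonal x - diagonal c).PosDef := by
  have hconj : (diagonal x * Ω * diagonal x).PosSemidef := by
    simpa [diagonal_conjTranspose] using hΩ.conjTranspose_mul_mul_same (diagonal x)
  have hdiag : (diagonal fun j => 1 - c j).PosDef :=
    posDef_diagonal_iff.2 fun j => sub_pos.2 (hc j)
  convert PosDef.posSemidef_add hconj hdiag using 1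
  rw [← diagonal_sub, diagonal_one]
  abel

section Hessian

variable {a s ω : n → ℝ}

theorem lambdaMatrix_eq_diagonal (hs : ∀ j, s j ≠ 0) (hd : ∀ j, lowerRightDiag a s ω j ≠ 0) :
    (1 + diagonal (fun j => s j ^ 2) *
        (diagonal a + diagonal a * diagonal (fun j => s j ^ 2) + diagonal ω))⁻¹ *
      (diagonal a * diagonal (fun j => s j ^ 2)) =
      diagonal fun j => a j / lowerRightDiag a s ω j := by
  have hk : 1 + diagonal (fun j => s j ^ 2) *
      (diagonal a + diagonal a * diagonal (fun j => s j ^ 2) + diagonal ω) =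
      diagonal fun j => s j ^ 2 * lowerRightDiag a s ω j := by
    simp only [← diagonal_one, diagonal_mul_diagonal, diagonal_add]
    congr 1; funext j
    have := hs j
    unfold lowerRightDiag
    field_simp
    ring
  rw [hk, inv_eq_left_inv
      (diagonal_inv_mul_diagonal fun j => mul_ne_zero (pow_ne_zero 2 (hs j)) (hd j)),
    diagonal_mul_diagonal, diagonal_mul_diagonal]
  congr 1; funext j
  have := hs j; have := hd j
  field_simp

theorem fromBlocks_hessian_eq_sqrt_conj (ha : ∀ j, 0 < a j) (Ω : Matrix n n ℝ) :
    fromBlocks (diagonal a + Ω) (diagonal a * diagonal s) (diagonal a * diagonal s)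
        (diagonal a * (1 + diagonal fun j => s j ^ 2) + diagonal (fun j => (s j ^ 2)⁻¹) +
          diagonal ω) =
      fromBlocks (diagonal fun j => √(a j)) 0 0 (diagonal fun j => √(a j)) *
        fromBlocks
          (1 + (diagonal fun j => (√(a j))⁻¹) * Ω * diagonal fun j => (√(a j))⁻¹)
          (diagonal s) (diagonal s) (diagonal fun j => lowerRightDiag a s ω j / a j) *
        fromBlocks (diagonal fun j => √(a j)) 0 0 (diagonal fun j => √(a j)) := by
  set R : Matrix n n ℝ := diagonal fun j => √(a j)
  set R' : Matrix n n ℝ := diagonal fun j => (√(a j))⁻¹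
  have hsqrt (j : n) (x : ℝ) : √(a j) * x * √(a j) = a j * x := by
    rw [mul_right_comm, Real.mul_self_sqrt (ha j).le]
  have hsqrt_ne (j : n) : √(a j) ≠ 0 := (Real.sqrt_pos.2 (ha j)).ne'
  have hRR : R * R = diagonal a := by
    rw [diagonal_mul_diagonal]
    exact congrArg diagonal (funext fun j => Real.mul_self_sqrt (ha j).le)
  rw [fromBlocks_diag_mul_fromBlocks_mul_fromBlocks_diag]
  congr 1
  · rw [show R * (1 + R' * Ω * R') * R = R * R + R * R' * Ω * (R' * R) by noncomm_ring, hRR,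
      diagonal_mul_diagonal_inv hsqrt_ne, diagonal_inv_mul_diagonal hsqrt_ne,
      Matrix.one_mul, Matrix.mul_one]
  · simp only [R, diagonal_mul_diagonal, hsqrt]
  · simp only [R, diagonal_mul_diagonal, hsqrt]
  · simp only [R, ← diagonal_one, diagonal_mul_diagonal, diagonal_add, hsqrt]
    congr 1; funext j
    rw [mul_div_cancel₀ _ (ha j).ne', lowerRightDiag]

theorem posDef_schurComplement_hessian (ha : ∀ j, 0 < a j) (hs : ∀ j, s j ≠ 0)
    (hω : ∀ j, 0 ≤ ω j) {Ω : Matrix n n ℝ} (hΩ : Ω.PosSemidef) :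
    (1 + (diagonal fun j => (√(a j))⁻¹) * Ω * (diagonal fun j => (√(a j))⁻¹) -
      diagonal s * (diagonal fun j => a j / lowerRightDiag a s ω j) * diagonal s).PosDef := by
  rw [diagonal_mul_diagonal, diagonal_mul_diagonal]
  refine posDef_one_add_diagonal_mul_mul_diagonal_sub_diagonal hΩ _ _ fun j => ?_
  calc s j * (a j / lowerRightDiag a s ω j) * s j
      = a j * s j ^ 2 / lowerRightDiag a s ω j := by ring
    _ < 1 := (div_lt_one (lowerRightDiag_pos ha hs hω j)).2 (mul_sq_lt_lowerRightDiag ha hs hω j)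

end Hessian

end Matrix

theorem hessian_block_inverse_general
    (p : ℕ) (a s : Fin p → ℝ)
    (ha : ∀ j, 0 < a j) (hs : ∀ j, 0 < s j)
    (Ω : Matrix (Fin p) (Fin p) ℝ) (hΩ : Ω.PosDef)
    (ω : Fin p → ℝ) (hω : ∀ j, ω j = Ω j j)
    (Λ : Matrix (Fin p) (Fin p) ℝ)
    (hΛ : Λ = (1 + Matrix.diagonal (fun j => s j ^ 2) *
          (Matrix.diagonal a + Matrix.diagonal a * Matrix.diagonal (fun j => s j ^ 2) +
            Matrix.diagonal ω))⁻¹ *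
        (Matrix.diagonal a * Matrix.diagonal (fun j => s j ^ 2)))
    (C : Matrix (Fin p) (Fin p) ℝ)
    (hC : C = (1 + Matrix.diagonal (fun j => (Real.sqrt (a j))⁻¹) * Ω *
          Matrix.diagonal (fun j => (Real.sqrt (a j))⁻¹) -
          Matrix.diagonal s * Λ * Matrix.diagonal s)⁻¹)
    (M : Matrix (Fin p ⊕ Fin p) (Fin p ⊕ Fin p) ℝ)
    (hM : M = Matrix.fromBlocks
        (Matrix.diagonal a + Ω) (Matrix.diagonal a * Matrix.diagonal s)
        (Matrix.diagonal a * Matrix.diagonal s)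
        (Matrix.diagonal a * (1 + Matrix.diagonal (fun j => s j ^ 2)) +
          Matrix.diagonal (fun j => (s j ^ 2)⁻¹) + Matrix.diagonal ω))
    (P : Matrix (Fin p ⊕ Fin p) (Fin p ⊕ Fin p) ℝ)
    (hP : P = Matrix.fromBlocks
          (Matrix.diagonal (fun j => (Real.sqrt (a j))⁻¹)) 0 0
          (Matrix.diagonal (fun j => (Real.sqrt (a j))⁻¹)) *
        Matrix.fromBlocks C (-(C * Matrix.diagonal s * Λ))
          (-(Λ * Matrix.diagonal s * C))
          (Λ + Λ * Matrix.diagonal s * C * Matrix.diagonal s * Λ) *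
        Matrix.fromBlocks
          (Matrix.diagonal (fun j => (Real.sqrt (a j))⁻¹)) 0 0
          (Matrix.diagonal (fun j => (Real.sqrt (a j))⁻¹))) :
    M * P = 1 := by
  have hω_nonneg (j : Fin p) : 0 ≤ ω j := hω j ▸ hΩ.posSemidef.diag_nonneg
  have hs_ne (j : Fin p) : s j ≠ 0 := (hs j).ne'
  have hd := lowerRightDiag_pos ha hs_ne hω_nonneg
  have hΛ_diag : Λ = diagonal fun j => a j / lowerRightDiag a s ω j :=
    hΛ ▸ lambdaMatrix_eq_diagonal hs_ne fun j => (hd j).ne'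
  have hC_inv : (1 + (diagonal fun j => (√(a j))⁻¹) * Ω * (diagonal fun j => (√(a j))⁻¹) -
      diagonal s * Λ * diagonal s) * C = 1 := by
    rw [hC]
    refine mul_nonsing_inv _ ((isUnit_iff_isUnit_det _).1 (PosDef.isUnit ?_))
    exact hΛ_diag ▸ posDef_schurComplement_hessian ha hs_ne hω_nonneg hΩ.posSemidef
  have hΛ_inv : (diagonal fun j => lowerRightDiag a s ω j / a j) * Λ = 1 := by
    rw [hΛ_diag, diagonal_mul_diagonal, ← diagonal_one]
    congr 1; funext j
    field_simp [(ha j).ne', (hd j).ne']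
  have hscale : fromBlocks (diagonal fun j => √(a j)) 0 0 (diagonal fun j => √(a j)) *
      fromBlocks (diagonal fun j => (√(a j))⁻¹) 0 0 (diagonal fun j => (√(a j))⁻¹) = 1 := by
    rw [fromBlocks_multiply, diagonal_mul_diagonal_inv fun j => (Real.sqrt_pos.2 (ha j)).ne']
    simp
  rw [hM, fromBlocks_hessian_eq_sqrt_conj ha, hP]
  exact conj_mul_conj_eq_one hscale (fromBlocks_mul_fromBlocks_schur_eq_one hΛ_inv hC_inv)

/-- Proposition A.1: the block matrix
`M = [[D_a + Ω, D_a D_s], [D_a D_s, D_a(I + D_s²) + D_s^{−2} + D_ω]]`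
has inverse
`P = blockdiag(D_a^{−1/2}, D_a^{−1/2}) · [[C, −C D_s Λ], [−Λ D_s C, Λ + Λ D_s C D_s Λ]]
     · blockdiag(D_a^{−1/2}, D_a^{−1/2})`,
i.e. `M · P = I_{2p}`. -/
theorem hessian_block_inverse
    (p : ℕ) (hp : 0 < p) (a s : Fin p → ℝ)
    (ha : ∀ j, 0 < a j) (hs : ∀ j, 0 < s j)
    (Ω : Matrix (Fin p) (Fin p) ℝ) (hΩ : Ω.PosDef)
    (ω : Fin p → ℝ) (hω : ∀ j, ω j = Ω j j)
    (Λ : Matrix (Fin p) (Fin p) ℝ)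
    (hΛ : Λ = (1 + Matrix.diagonal (fun j => s j ^ 2) *
          (Matrix.diagonal a + Matrix.diagonal a * Matrix.diagonal (fun j => s j ^ 2) +
            Matrix.diagonal ω))⁻¹ *
        (Matrix.diagonal a * Matrix.diagonal (fun j => s j ^ 2)))
    (C : Matrix (Fin p) (Fin p) ℝ)
    (hC : C = (1 + Matrix.diagonal (fun j => (Real.sqrt (a j))⁻¹) * Ω *
          Matrix.diagonal (fun j => (Real.sqrt (a j))⁻¹) -
          Matrix.diagonal s * Λ * Matrix.diagonal s)⁻¹)
    (M : Matrix (Fin p ⊕ Fin p) (Fin p ⊕ Fin p) ℝ)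
    (hM : M = Matrix.fromBlocks
        (Matrix.diagonal a + Ω) (Matrix.diagonal a * Matrix.diagonal s)
        (Matrix.diagonal a * Matrix.diagonal s)
        (Matrix.diagonal a * (1 + Matrix.diagonal (fun j => s j ^ 2)) +
          Matrix.diagonal (fun j => (s j ^ 2)⁻¹) + Matrix.diagonal ω))
    (P : Matrix (Fin p ⊕ Fin p) (Fin p ⊕ Fin p) ℝ)
    (hP : P = Matrix.fromBlocks
          (Matrix.diagonal (fun j => (Real.sqrt (a j))⁻¹)) 0 0
          (Matrix.diagonal (fun j => (Real.sqrt (a j))⁻¹)) *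
        Matrix.fromBlocks C (-(C * Matrix.diagonal s * Λ))
          (-(Λ * Matrix.diagonal s * C))
          (Λ + Λ * Matrix.diagonal s * C * Matrix.diagonal s * Λ) *
        Matrix.fromBlocks
          (Matrix.diagonal (fun j => (Real.sqrt (a j))⁻¹)) 0 0
          (Matrix.diagonal (fun j => (Real.sqrt (a j))⁻¹))) :
    M * P = 1 :=
  hessian_block_inverse_general p a s ha hs Ω hΩ ω hω Λ hΛ C hC M hM P hP
end

section
/- Let p, m be positive integers, a, s ∈ ℝᵖ with strictly positive entries, Ω a symmetric positive definite real p×p matrix with diagonal vector ω, and x ∈ ℝᵐ (viewed as an m×1 column matrix). Define Λ = (I_p + D_{s}²(D_a + D_a D_{s}² + D_ω))⁻¹ D_a D_{s}², G = D_s Λ D_s, C = (I_p + D_a^{−1/2} Ω D_a^{−1/2} − G)⁻¹, and E = G + (I_p − G) C (I_p − G). Let N = [D_a ⊗ x, D_{a⊙s} ⊗ x] be the mp×2p matrix formed by horizontally concatenating the Kronecker products D_a ⊗ x and D_{a⊙s} ⊗ x (where a⊙s is the entrywise product), and let P = [[C, −C D_s Λ], [−Λ D_s C, Λ + Λ D_s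 C D_s Λ]] conjugated on both sides by the block-diagonal matrix with blocks D_a^{−1/2}, D_a^{−1/2} (as in Proposition A.1). Then N · P · Nᵀ = (D_a^{1/2} E D_a^{1/2}) ⊗ (x xᵀ). -/
/-!
Writing `R = D_a^{1/2}` and `S = D_s`, one has `D_a = R R` and `D_{a⊙s} = R S R`, so `N` is the
Kronecker product of `R · [R, S R]` with the column `x`, and conjugating by
`blockdiag(R⁻¹, R⁻¹)` turns `[R, S R]` into `[1, S]`. Hence
`N P Nᵀ = (R · [1, S] B [1, S]ᵀ · R) ⊗ x xᵀ`, where `B` is the inner block matrix, and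
multiplying out `[1, S] B [1, S]ᵀ` gives `G + (1 - G) C (1 - G) = E` with `G = S Λ S`.
-/

open Matrix Kronecker

namespace Matrix

section KroneckerColumn

variable {α l l' n n' m ι : Type*} [CommSemiring α] [Unique ι]

theorem reindex_kronecker_replicateCol_mul_mul_transpose [Fintype n] [Fintype n']
    (M : Matrix l n α) (Q : Matrix n n' α) (M' : Matrix l' n' α) (x : m → α) :
    reindex (Equiv.refl (l × m)) (Equiv.prodUnique n ι) (M ⊗ₖ replicateCol ι x) * Q *
        (reindex (Equiv.refl (l' × m)) (Equiv.prodUnique n' ι) (M' ⊗ₖ replicateCol ι x))ᵀ =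
      (M * Q * M'ᵀ) ⊗ₖ vecMulVec x x := by
  ext ⟨i, k⟩ ⟨j, k'⟩
  simp only [mul_apply, reindex_apply, submatrix_apply, transpose_apply, kroneckerMap_apply,
    vecMulVec_apply, Equiv.refl_symm, Equiv.refl_apply, replicateCol_apply,
    Equiv.prodUnique_symm_apply, Finset.sum_mul]
  exact Finset.sum_congr rfl fun _ _ => Finset.sum_congr rfl fun _ _ => by ring

theorem fromCols_reindex_kronecker_replicateCol
    (M₁ : Matrix l n α) (M₂ : Matrix l n' α) (x : m → α) :
    fromCols (reindex (Equiv.refl (l × m)) (Equiv.prodUnique n ι) (M₁ ⊗ₖ replicateCol ι x))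
        (reindex (Equiv.refl (l × m)) (Equiv.prodUnique n' ι) (M₂ ⊗ₖ replicateCol ι x)) =
      reindex (Equiv.refl (l × m)) (Equiv.prodUnique (n ⊕ n') ι)
        (fromCols M₁ M₂ ⊗ₖ replicateCol ι x) := by
  ext ⟨i, k⟩ (j | j) <;> rfl

end KroneckerColumn

section BlockConjugation

variable {α n : Type*} [Ring α] [Fintype n] [DecidableEq n]

theorem fromCols_one_mul_fromBlocks_mul_fromRows_one (S C Λ : Matrix n n α) :
    fromCols (1 : Matrix n n α) S *
        fromBlocks C (-(C * S * Λ)) (-(Λ * S * C)) (Λ + Λ * S * C * S * Λ) *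
        fromRows (1 : Matrix n n α) S =
      S * Λ * S + (1 - S * Λ * S) * C * (1 - S * Λ * S) := by
  simp only [fromCols_mul_fromBlocks, fromCols_mul_fromRows]
  noncomm_ring

theorem fromCols_mul_fromBlocks_conj_mul_fromRows {R R' S : Matrix n n α}
    (hRR' : R * R' = 1) (hR'R : R' * R = 1) (B : Matrix (n ⊕ n) (n ⊕ n) α) :
    fromCols (R * R) (R * S * R) * (fromBlocks R' 0 0 R' * B * fromBlocks R' 0 0 R') *
        fromRows (R * R) (R * S * R) =
      R * (fromCols (1 : Matrix n n α) S * B * fromRows (1 : Matrix n n α) S) * R := by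
  have hleft : fromCols (R * R) (R * S * R) * fromBlocks R' 0 0 R' =
      R * fromCols (1 : Matrix n n α) S := by
    rw [fromCols_mul_fromBlocks, mul_fromCols]
    simp only [Matrix.mul_zero, add_zero, zero_add, Matrix.mul_assoc, hRR', Matrix.mul_one]
  have hright : fromBlocks R' 0 0 R' * fromRows (R * R) (R * S * R) =
      fromRows (1 : Matrix n n α) S * R := by
    rw [fromBlocks_mul_fromRows, fromRows_mul]
    simp only [Matrix.zero_mul, add_zero, zero_add, ← Matrix.mul_assoc, hR'R, Matrix.one_mul]
  calc _ = fromCols (R * R) (R * S * R) * fromBlocks R' 0 0 R' * B *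
          (fromBlocks R' 0 0 R' * fromRows (R * R) (R * S * R)) := by
        simp only [Matrix.mul_assoc]
    _ = _ := by
        rw [hleft, hright]
        simp only [Matrix.mul_assoc]

end BlockConjugation

end Matrix

theorem schur_correction_kronecker_general
    (p m : ℕ)
    (a s : Fin p → ℝ) (ha : ∀ j, 0 < a j)
    (x : Fin m → ℝ)
    (Λ : Matrix (Fin p) (Fin p) ℝ)
    (G : Matrix (Fin p) (Fin p) ℝ)
    (hG : G = Matrix.diagonal s * Λ * Matrix.diagonal s)
    (C : Matrix (Fin p) (Fin p) ℝ)
    (E : Matrix (Fin p) (Fin p) ℝ)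
    (hE : E = G + (1 - G) * C * (1 - G))
    (N : Matrix (Fin p × Fin m) (Fin p ⊕ Fin p) ℝ)
    (hN : N = Matrix.fromCols
        (Matrix.reindex (Equiv.refl (Fin p × Fin m)) (Equiv.prodUnique (Fin p) (Fin 1))
          (Matrix.diagonal a ⊗ₖ Matrix.replicateCol (Fin 1) x))
        (Matrix.reindex (Equiv.refl (Fin p × Fin m)) (Equiv.prodUnique (Fin p) (Fin 1))
          (Matrix.diagonal (fun j => a j * s j) ⊗ₖ Matrix.replicateCol (Fin 1) x)))
    (P : Matrix (Fin p ⊕ Fin p) (Fin p ⊕ Fin p) ℝ)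
    (hP : P = Matrix.fromBlocks
          (Matrix.diagonal (fun j => (Real.sqrt (a j))⁻¹)) 0 0
          (Matrix.diagonal (fun j => (Real.sqrt (a j))⁻¹)) *
        Matrix.fromBlocks C (-(C * Matrix.diagonal s * Λ))
          (-(Λ * Matrix.diagonal s * C))
          (Λ + Λ * Matrix.diagonal s * C * Matrix.diagonal s * Λ) *
        Matrix.fromBlocks
          (Matrix.diagonal (fun j => (Real.sqrt (a j))⁻¹)) 0 0
          (Matrix.diagonal (fun j => (Real.sqrt (a j))⁻¹))) :
    N * P * Nᵀ =
      (Matrix.diagonal (fun j => Real.sqrt (a j)) * E *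
          Matrix.diagonal (fun j => Real.sqrt (a j))) ⊗ₖ
        Matrix.vecMulVec x x := by
  have hsqrt : ∀ j, Real.sqrt (a j) ≠ 0 := fun j => (Real.sqrt_pos.mpr (ha j)).ne'
  have hDa : diagonal a = diagonal (fun j => √(a j)) * diagonal (fun j => √(a j)) := by
    rw [diagonal_mul_diagonal]
    exact congrArg diagonal (funext fun j => (Real.mul_self_sqrt (ha j).le).symm)
  have hDas : diagonal (fun j => a j * s j) =
      diagonal (fun j => √(a j)) * diagonal s * diagonal (fun j => √(a j)) := by
    simp only [diagonal_mul_diagonal]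
    exact congrArg diagonal (funext fun j => by rw [mul_right_comm, Real.mul_self_sqrt (ha j).le])
  have hRR' : diagonal (fun j => √(a j)) * diagonal (fun j => (√(a j))⁻¹) = 1 := by
    simp [diagonal_mul_diagonal, hsqrt]
  have hR'R : diagonal (fun j => (√(a j))⁻¹) * diagonal (fun j => √(a j)) = 1 := by
    simp [diagonal_mul_diagonal, hsqrt]
  rw [hN, fromCols_reindex_kronecker_replicateCol,
    reindex_kronecker_replicateCol_mul_mul_transpose, transpose_fromCols, diagonal_transpose,
    diagonal_transpose, hDa, hDas, hP, fromCols_mul_fromBlocks_conj_mul_fromRows hRR' hR'R,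
    fromCols_one_mul_fromBlocks_mul_fromRows_one, hE, hG]

/-- Proposition A.3: with
`N = [D_a ⊗ x, D_{a⊙s} ⊗ x]` (x viewed as an `m×1` column) and `P` the block
matrix `[[C, −C D_s Λ], [−Λ D_s C, Λ + Λ D_s C D_s Λ]]` conjugated by
`blockdiag(D_a^{−1/2}, D_a^{−1/2})`, one has
`N · P · Nᵀ = (D_a^{1/2} E D_a^{1/2}) ⊗ (x xᵀ)`
where `E = G + (I − G) C (I − G)` and `G = D_s Λ D_s`. -/
theorem schur_correction_kronecker
    (p m : ℕ) (hp : 0 < p) (hm : 0 < m)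
    (a s : Fin p → ℝ) (ha : ∀ j, 0 < a j) (hs : ∀ j, 0 < s j)
    (Ω : Matrix (Fin p) (Fin p) ℝ) (hΩ : Ω.PosDef)
    (ω : Fin p → ℝ) (hω : ∀ j, ω j = Ω j j)
    (x : Fin m → ℝ)
    (Λ : Matrix (Fin p) (Fin p) ℝ)
    (hΛ : Λ = (1 + Matrix.diagonal (fun j => s j ^ 2) *
          (Matrix.diagonal a + Matrix.diagonal a * Matrix.diagonal (fun j => s j ^ 2) +
            Matrix.diagonal ω))⁻¹ *
        (Matrix.diagonal a * Matrix.diagonal (fun j => s j ^ 2)))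
    (G : Matrix (Fin p) (Fin p) ℝ)
    (hG : G = Matrix.diagonal s * Λ * Matrix.diagonal s)
    (C : Matrix (Fin p) (Fin p) ℝ)
    (hC : C = (1 + Matrix.diagonal (fun j => (Real.sqrt (a j))⁻¹) * Ω *
          Matrix.diagonal (fun j => (Real.sqrt (a j))⁻¹) - G)⁻¹)
    (E : Matrix (Fin p) (Fin p) ℝ)
    (hE : E = G + (1 - G) * C * (1 - G))
    (N : Matrix (Fin p × Fin m) (Fin p ⊕ Fin p) ℝ)
    (hN : N = Matrix.fromCols
        (Matrix.reindex (Equiv.refl (Fin p × Fin m)) (Equiv.prodUnique (Fin p) (Fin 1))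
          (Matrix.diagonal a ⊗ₖ Matrix.replicateCol (Fin 1) x))
        (Matrix.reindex (Equiv.refl (Fin p × Fin m)) (Equiv.prodUnique (Fin p) (Fin 1))
          (Matrix.diagonal (fun j => a j * s j) ⊗ₖ Matrix.replicateCol (Fin 1) x)))
    (P : Matrix (Fin p ⊕ Fin p) (Fin p ⊕ Fin p) ℝ)
    (hP : P = Matrix.fromBlocks
          (Matrix.diagonal (fun j => (Real.sqrt (a j))⁻¹)) 0 0
          (Matrix.diagonal (fun j => (Real.sqrt (a j))⁻¹)) *
        Matrix.fromBlocks C (-(C * Matrix.diagonal s * Λ))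
          (-(Λ * Matrix.diagonal s * C))
          (Λ + Λ * Matrix.diagonal s * C * Matrix.diagonal s * Λ) *
        Matrix.fromBlocks
          (Matrix.diagonal (fun j => (Real.sqrt (a j))⁻¹)) 0 0
          (Matrix.diagonal (fun j => (Real.sqrt (a j))⁻¹))) :
    N * P * Nᵀ =
      (Matrix.diagonal (fun j => Real.sqrt (a j)) * E *
          Matrix.diagonal (fun j => Real.sqrt (a j))) ⊗ₖ
        Matrix.vecMulVec x x :=
  schur_correction_kronecker_general p m a s ha x Λ G hG C E hE N hN P hP
end

section
/- Let p be a positive integer, a, s ∈ ℝᵖ with strictly positive entries, and Ω a symmetric positive definite real p×p matrix with diagonal vector ω. Define Λ = (I_p + D_{s}²(D_a + D_a D_{s}² + D_ω))⁻¹ D_a D_{s}², G = D_s Λ D_s, C = (I_p + D_a^{−1/2} Ω D_a^{−1/2} − G)⁻¹, and E = G + (I_p − G) C (I_p − G). Then the matrix Ω⁻¹ + D_a⁻¹ + D_{s}⁴ (I_p + D_{s}²(D_a + D_ω))⁻¹ is invertible and D_a^{1/2} (I_p − E) D_a^{1/2} = (Ω⁻¹ + D_a⁻¹ + D_{s}⁴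 (I_p + D_{s}²(D_a + D_ω))⁻¹)⁻¹. -/
/-!
Everything except `Ω` is diagonal: `G = D_g` with `g_j = a_j s_j⁴ / (e_j + a_j s_j⁴)`,
`e_j = 1 + s_j²(a_j + ω_j)`, and the target is `(Ω⁻¹ + D_m)⁻¹` with `m_j = 1/a_j + s_j⁴/e_j`.
With `K = I + D_a^{-1/2} Ω D_a^{-1/2} - G`, so that `C = K⁻¹`, one has
`I - E = (I - G) K⁻¹ D_a^{-1/2} Ω D_a^{-1/2}`, and a Woodbury-type computation shows that
`D_a^{1/2} (I - E) D_a^{1/2}` is a right inverse of `Ω⁻¹ + D_m` as soon as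
`D_m D_a^{1/2} (I - G) = D_a^{-1/2}`, i.e. `m_j a_j (1 - g_j) = 1`, which holds because
`m_j a_j e_j = e_j + a_j s_j⁴`. Both `K` and `Ω⁻¹ + D_m` are positive definite, hence invertible,
since `0 < g_j < 1` and `ω_j > 0`.
-/

open Matrix

section Woodbury

variable {R : Type*} [Ring R] {Ω Ω' M D D' G C : R}

theorem one_sub_add_mul_mul_eq (hC : C * (1 + D' * Ω * D' - G) = 1) :
    1 - (G + (1 - G) * C * (1 - G)) = (1 - G) * C * (D' * Ω * D') := by
  calc 1 - (G + (1 - G) * C * (1 - G))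
      = (1 - G) * (C * (1 + D' * Ω * D' - G)) - (1 - G) * C * (1 - G) := by
        rw [hC, mul_one]; abel
    _ = (1 - G) * C * (D' * Ω * D') := by noncomm_ring

theorem woodbury_mul_eq_one (hΩ : Ω' * Ω = 1) (hD : D * D' = 1) (hD' : D' * D = 1)
    (hCK : C * (1 + D' * Ω * D' - G) = 1) (hKC : (1 + D' * Ω * D' - G) * C = 1)
    (hM : M * D * (1 - G) = D') :
    (Ω' + M) * (D * (1 - (G + (1 - G) * C * (1 - G))) * D) = 1 := by
  rw [one_sub_add_mul_mul_eq hCK]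
  calc (Ω' + M) * (D * ((1 - G) * C * (D' * Ω * D')) * D)
      = (Ω' + M) * (D * (1 - G) * C * D' * Ω * (D' * D)) := by noncomm_ring
    _ = Ω' * D * (1 - G) * C * D' * Ω + M * D * (1 - G) * C * D' * Ω := by
        rw [hD']; noncomm_ring
    _ = Ω' * D * (1 - G) * C * D' * Ω + Ω' * (D * D') * Ω * D' * C * D' * Ω := by
        rw [hM, hD, mul_one, hΩ]; noncomm_ring
    _ = Ω' * D * ((1 + D' * Ω * D' - G) * C) * D' * Ω := by noncomm_ring
    _ = 1 := by rw [hKC, mul_one, mul_assoc Ω', hD, mul_one, hΩ]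

end Woodbury

theorem Matrix.diagonal_mul_diagonal_eq_one {n α : Type*} [Fintype n] [DecidableEq n]
    [Semiring α] {v w : n → α} (h : ∀ i, v i * w i = 1) : diagonal v * diagonal w = 1 := by
  rw [diagonal_mul_diagonal, ← diagonal_one]
  exact congrArg diagonal (funext h)

theorem Matrix.inv_diagonal_of_ne_zero_s16 {n K : Type*} [Fintype n] [DecidableEq n] [Field K]
    {v : n → K} (hv : ∀ i, v i ≠ 0) : (diagonal v)⁻¹ = diagonal fun i => (v i)⁻¹ :=
  inv_eq_right_inv <| diagonal_mul_diagonal_eq_one fun i => mul_inv_cancel₀ (hv i)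

theorem Matrix.PosSemidef.posDef_one_add_diagonal_mul_mul_diagonal_sub_diagonal
    {n : Type*} [Fintype n] [DecidableEq n] {Ω : Matrix n n ℝ} (hΩ : Ω.PosSemidef)
    (v : n → ℝ) {g : n → ℝ} (hg : ∀ i, g i < 1) :
    (1 + diagonal v * Ω * diagonal v - diagonal g).PosDef := by
  have hsplit : 1 + diagonal v * Ω * diagonal v - diagonal g =
      diagonal (fun i => 1 - g i) + diagonal v * Ω * (diagonal v)ᴴ := by
    rw [diagonal_conjTranspose, star_trivial, ← diagonal_one, ← diagonal_sub]; abel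
  rw [hsplit]
  exact (PosDef.diagonal fun i => sub_pos.2 (hg i)).add_posSemidef
    (hΩ.mul_mul_conjTranspose_same _)

section Diagonal

variable {n K : Type*} [Fintype n] [DecidableEq n] [Field K] (a s ω : n → K)

theorem diagonal_mul_inv_mul_diagonal_eq
    (hd : ∀ j, 1 + s j ^ 2 * (a j + ω j) + a j * s j ^ 4 ≠ 0) :
    diagonal s * ((1 + diagonal (fun j => s j ^ 2) *
        (diagonal a + diagonal a * diagonal (fun j => s j ^ 2) + diagonal ω))⁻¹ *
      (diagonal a * diagonal (fun j => s j ^ 2))) * diagonal s =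
      diagonal fun j => a j * s j ^ 4 / (1 + s j ^ 2 * (a j + ω j) + a j * s j ^ 4) := by
  rw [← diagonal_one]
  simp only [diagonal_mul_diagonal, diagonal_add]
  rw [inv_diagonal_of_ne_zero_s16, diagonal_mul_diagonal, diagonal_mul_diagonal,
    diagonal_mul_diagonal]
  · congr; ext j; field_simp; ring
  · exact fun j => by convert hd j using 1; ring

theorem inv_diagonal_add_diagonal_mul_inv_eq (ha : ∀ j, a j ≠ 0)
    (he : ∀ j, 1 + s j ^ 2 * (a j + ω j) ≠ 0) :
    (diagonal a)⁻¹ + diagonal (fun j => s j ^ 4) *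
      (1 + diagonal (fun j => s j ^ 2) * (diagonal a + diagonal ω))⁻¹ =
      diagonal fun j => (a j)⁻¹ + s j ^ 4 / (1 + s j ^ 2 * (a j + ω j)) := by
  rw [← diagonal_one]
  simp only [diagonal_mul_diagonal, diagonal_add]
  rw [inv_diagonal_of_ne_zero_s16 ha, inv_diagonal_of_ne_zero_s16 he, diagonal_mul_diagonal,
    diagonal_add]
  simp only [div_eq_mul_inv]

end Diagonal

theorem Real.inv_add_div_mul_sqrt_mul_one_sub_div {a e t : ℝ} (ha : 0 < a) (he : e ≠ 0)
    (hd : e + a * t ≠ 0) : (a⁻¹ + t / e) * √a * (1 - a * t / (e + a * t)) = (√a)⁻¹ := by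
  have hsa : √a ≠ 0 := (Real.sqrt_pos.2 ha).ne'
  field_simp
  rw [Real.sq_sqrt ha.le]
  ring

theorem schur_complement_closed_form_general
    (p : ℕ) (a s : Fin p → ℝ)
    (ha : ∀ j, 0 < a j)
    (Ω : Matrix (Fin p) (Fin p) ℝ) (hΩ : Ω.PosDef)
    (ω : Fin p → ℝ) (hω : ∀ j, ω j = Ω j j)
    (Λ : Matrix (Fin p) (Fin p) ℝ)
    (hΛ : Λ = (1 + Matrix.diagonal (fun j => s j ^ 2) *
          (Matrix.diagonal a + Matrix.diagonal a * Matrix.diagonal (fun j => s j ^ 2) +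
            Matrix.diagonal ω))⁻¹ *
        (Matrix.diagonal a * Matrix.diagonal (fun j => s j ^ 2)))
    (G : Matrix (Fin p) (Fin p) ℝ)
    (hG : G = Matrix.diagonal s * Λ * Matrix.diagonal s)
    (C : Matrix (Fin p) (Fin p) ℝ)
    (hC : C = (1 + Matrix.diagonal (fun j => (Real.sqrt (a j))⁻¹) * Ω *
          Matrix.diagonal (fun j => (Real.sqrt (a j))⁻¹) - G)⁻¹)
    (E : Matrix (Fin p) (Fin p) ℝ)
    (hE : E = G + (1 - G) * C * (1 - G)) :
    IsUnit (Ω⁻¹ + (Matrix.diagonal a)⁻¹ + Matrix.diagonal (fun j => s j ^ 4) *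
        (1 + Matrix.diagonal (fun j => s j ^ 2) *
          (Matrix.diagonal a + Matrix.diagonal ω))⁻¹).det ∧
    Matrix.diagonal (fun j => Real.sqrt (a j)) * (1 - E) *
        Matrix.diagonal (fun j => Real.sqrt (a j)) =
      (Ω⁻¹ + (Matrix.diagonal a)⁻¹ + Matrix.diagonal (fun j => s j ^ 4) *
        (1 + Matrix.diagonal (fun j => s j ^ 2) *
          (Matrix.diagonal a + Matrix.diagonal ω))⁻¹)⁻¹ := by
  have hω_pos : ∀ j, 0 < ω j := fun j => hω j ▸ hΩ.diag_pos
  have he : ∀ j, 0 < 1 + s j ^ 2 * (a j + ω j) := fun j => by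
    have := ha j; have := hω_pos j; positivity
  have hd : ∀ j, 0 < 1 + s j ^ 2 * (a j + ω j) + a j * s j ^ 4 := fun j => by
    have := ha j; have := he j; positivity
  rw [hΛ, diagonal_mul_inv_mul_diagonal_eq a s ω fun j => (hd j).ne'] at hG
  have hK :
      (1 + diagonal (fun j => (√(a j))⁻¹) * Ω * diagonal (fun j => (√(a j))⁻¹) - G).PosDef :=
    hG ▸ hΩ.posSemidef.posDef_one_add_diagonal_mul_mul_diagonal_sub_diagonal _
      fun j => (div_lt_one (hd j)).2 (by linarith [he j])
  have hsqrt : ∀ j, √(a j) ≠ 0 := fun j => (Real.sqrt_pos.2 (ha j)).ne'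
  rw [add_assoc,
    inv_diagonal_add_diagonal_mul_inv_eq a s ω (fun j => (ha j).ne') fun j => (he j).ne']
  refine ⟨(hΩ.inv.add_posSemidef (PosDef.diagonal fun j => ?_).posSemidef).det_pos.ne'.isUnit,
    (inv_eq_right_inv ?_).symm⟩
  · have := ha j; have := he j; positivity
  rw [hE, hC]
  refine woodbury_mul_eq_one (nonsing_inv_mul Ω hΩ.det_pos.ne'.isUnit)
    (diagonal_mul_diagonal_eq_one fun j => mul_inv_cancel₀ (hsqrt j))
    (diagonal_mul_diagonal_eq_one fun j => inv_mul_cancel₀ (hsqrt j))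
    (nonsing_inv_mul _ hK.det_pos.ne'.isUnit) (mul_nonsing_inv _ hK.det_pos.ne'.isUnit) ?_
  rw [hG, ← diagonal_one, diagonal_sub, diagonal_mul_diagonal, diagonal_mul_diagonal]
  exact congrArg diagonal (funext fun j =>
    Real.inv_add_div_mul_sqrt_mul_one_sub_div (ha j) (he j).ne' (hd j).ne')

/-- Proposition A.4: with `a, s` strictly positive, `Ω`
symmetric positive definite with diagonal `ω`,
`Λ = (I + D_s²(D_a + D_a D_s² + D_ω))⁻¹ D_a D_s²`, `G = D_s Λ D_s`,
`C = (I + D_a^{−1/2} Ω D_a^{−1/2} − G)⁻¹`, `E = G + (I − G) C (I − G)`,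
the matrix `Ω⁻¹ + D_a⁻¹ + D_s⁴ (I + D_s²(D_a + D_ω))⁻¹` is invertible and
`D_a^{1/2} (I − E) D_a^{1/2} = (Ω⁻¹ + D_a⁻¹ + D_s⁴ (I + D_s²(D_a + D_ω))⁻¹)⁻¹`. -/
theorem schur_complement_closed_form
    (p : ℕ) (hp : 0 < p) (a s : Fin p → ℝ)
    (ha : ∀ j, 0 < a j) (hs : ∀ j, 0 < s j)
    (Ω : Matrix (Fin p) (Fin p) ℝ) (hΩ : Ω.PosDef)
    (ω : Fin p → ℝ) (hω : ∀ j, ω j = Ω j j)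
    (Λ : Matrix (Fin p) (Fin p) ℝ)
    (hΛ : Λ = (1 + Matrix.diagonal (fun j => s j ^ 2) *
          (Matrix.diagonal a + Matrix.diagonal a * Matrix.diagonal (fun j => s j ^ 2) +
            Matrix.diagonal ω))⁻¹ *
        (Matrix.diagonal a * Matrix.diagonal (fun j => s j ^ 2)))
    (G : Matrix (Fin p) (Fin p) ℝ)
    (hG : G = Matrix.diagonal s * Λ * Matrix.diagonal s)
    (C : Matrix (Fin p) (Fin p) ℝ)
    (hC : C = (1 + Matrix.diagonal (fun j => (Real.sqrt (a j))⁻¹) * Ω *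
          Matrix.diagonal (fun j => (Real.sqrt (a j))⁻¹) - G)⁻¹)
    (E : Matrix (Fin p) (Fin p) ℝ)
    (hE : E = G + (1 - G) * C * (1 - G)) :
    IsUnit (Ω⁻¹ + (Matrix.diagonal a)⁻¹ + Matrix.diagonal (fun j => s j ^ 4) *
        (1 + Matrix.diagonal (fun j => s j ^ 2) *
          (Matrix.diagonal a + Matrix.diagonal ω))⁻¹).det ∧
    Matrix.diagonal (fun j => Real.sqrt (a j)) * (1 - E) *
        Matrix.diagonal (fun j => Real.sqrt (a j)) =
      (Ω⁻¹ + (Matrix.diagonal a)⁻¹ + Matrix.diagonal (fun j => s j ^ 4) *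
        (1 + Matrix.diagonal (fun j => s j ^ 2) *
          (Matrix.diagonal a + Matrix.diagonal ω))⁻¹)⁻¹ :=
  schur_complement_closed_form_general p a s ha Ω hΩ ω hω Λ hΛ G hG C hC E hE
end
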